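/- Let (W,S) be a finite Coxeter system and let Γ be a connected W-digraph. Then the number of vertices of Γ is at most |W|. -/

import Mathlib

open Finsupp

set_option synthInstance.maxHeartbeats 1000000
set_option maxHeartbeats 1000000

noncomputable section

/-- The field `ℚ(u)` of rational functions. -/
abbrev Kq : Type := RatFunc ℚ

/-- The indeterminate `u`. -/
def uu : Kq := RatFunc.X

/-- An `S`-labeled digraph on vertex type `V` with labels in `B`:
`Edge a b s d` means there is an edge from `a` to `b` labeled `s`, which is
dashed if `d = true` and solid if `d = false`.  There are no loops, and every
vertex occurs in exactly one edge with any given label. -/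
structure SLabeledDigraph (V B : Type*) where
  Edge : V → V → B → Bool → Prop
  no_loop : ∀ v s d, ¬ Edge v v s d
  unique_edge : ∀ v s, ∃! e : V × V × Bool,
    (e.1 = v ∨ e.2.1 = v) ∧ Edge e.1 e.2.1 s e.2.2

namespace SLabeledDigraph

variable {V B : Type*} (Γ : SLabeledDigraph V B)

/-- Swap the endpoints of an edge datum. -/
def eswap {V : Type*} (e : V × V × Bool) : V × V × Bool := (e.2.1, e.1, e.2.2)

/-- The reversed digraph `Γ_rev`, with all edge directions reversed but types
and labels kept. -/
def rev : SLabeledDigraph V B where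
  Edge a b s d := Γ.Edge b a s d
  no_loop v s d := Γ.no_loop v s d
  unique_edge v s := by
    obtain ⟨e, ⟨hinc, hedge⟩, huniq⟩ := Γ.unique_edge v s
    refine ⟨eswap e, ⟨Or.symm hinc, hedge⟩, ?_⟩
    rintro e' ⟨hinc', hedge'⟩
    have h1 : eswap e' = e := huniq (eswap e') ⟨Or.symm hinc', hedge'⟩
    calc e' = eswap (eswap e') := rfl
    _ = eswap e := by rw [h1]

/-- The restriction `Γ_J`: same vertices, only edges with labels in `J`. -/
def restrict (J : Set B) : SLabeledDigraph V J where
  Edge a b s d := Γ.Edge a b s.1 d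
  no_loop v s d := Γ.no_loop v s.1 d
  unique_edge v s := Γ.unique_edge v s.1

/-- Directed adjacency (ignoring labels and edge types). -/
def DAdj (a b : V) : Prop := ∃ s d, Γ.Edge a b s d

/-- Undirected adjacency. -/
def UAdj (a b : V) : Prop := Γ.DAdj a b ∨ Γ.DAdj b a

/-- `Γ` is connected if any two vertices are joined by an undirected path. -/
def Connected : Prop := ∀ a b : V, Relation.ReflTransGen Γ.UAdj a b

/-- A source is a vertex at which no edge ends. -/
def IsSource (a : V) : Prop := ∀ b s d, ¬ Γ.Edge b a s d

/-- A sink is a vertex at which no edge begins. -/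
def IsSink (a : V) : Prop := ∀ b s d, ¬ Γ.Edge a b s d

/-- `Γ` is acyclic if it has no nonempty directed circuit. -/
def Acyclic : Prop := ∀ a : V, ¬ Relation.TransGen Γ.DAdj a a

/-- The setoid whose classes are the connected components of `Γ`. -/
def compSetoid : Setoid V :=
  ⟨Relation.ReflTransGen Γ.UAdj,
    ⟨fun _ => Relation.ReflTransGen.refl,
     fun h => by
       haveI : Std.Symm Γ.UAdj := ⟨fun _ _ hab => Or.symm hab⟩
       exact Std.Symm.symm _ _ h,
     fun h1 h2 => Relation.ReflTransGen.trans h1 h2⟩⟩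

end SLabeledDigraph

/-- The Hecke algebra of a Coxeter system over `ℚ(u)`: an associative
`ℚ(u)`-algebra `H` with basis `{T_w : w ∈ W}` such that `T_1 = 1` and
`T_s T_w = T_{sw}` if `ℓ(sw) > ℓ(w)`, while
`T_s T_w = u² T_{sw} + (u² - 1) T_w` if `ℓ(sw) < ℓ(w)`. -/
structure HeckeAlgebra {B W : Type*} [Group W] {M : CoxeterMatrix B}
    (cs : CoxeterSystem M W) (H : Type*) [Ring H] [Algebra Kq H] where
  T : W → H
  basis : Module.Basis W Kq H
  basis_eq : ∀ w, basis w = T w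
  T_one : T 1 = 1
  T_mul_of_lt : ∀ (i : B) (w : W), cs.length w < cs.length (cs.simple i * w) →
    T (cs.simple i) * T w = T (cs.simple i * w)
  T_mul_of_gt : ∀ (i : B) (w : W), cs.length (cs.simple i * w) < cs.length w →
    T (cs.simple i) * T w = (uu ^ 2) • T (cs.simple i * w) + (uu ^ 2 - 1) • T w

universe uV uW
variable {B : Type*} {W : Type uW} [Group W] {M : CoxeterMatrix B}
variable {H : Type*} [Ring H] [Algebra Kq H]

/-- `ρ` is the representation of `H` on `M(Γ)` (the `ℚ(u)`-vector space with
basis the vertices of `Γ`) in which each `T_s` acts by the operator `τ_s`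
determined by the edges of `Γ`. -/
def WDigraphRep {V : Type*} (cs : CoxeterSystem M W) (ha : HeckeAlgebra cs H)
    (Γ : SLabeledDigraph V B)
    (ρ : H →ₐ[Kq] Module.End Kq (V →₀ Kq)) : Prop :=
  ∀ (a b : V) (i : B),
    (Γ.Edge a b i false →
      ρ (ha.T (cs.simple i)) (single a (1 : Kq)) = single b (1 : Kq) ∧
      ρ (ha.T (cs.simple i)) (single b (1 : Kq))
        = (uu ^ 2 - 1) • single b (1 : Kq) + (uu ^ 2) • single a (1 : Kq)) ∧
    (Γ.Edge a b i true →
      ρ (ha.T (cs.simple i)) (single a (1 : Kq)) = uu • single a (1 : Kq) + (uu + 1) • single b (1 : Kq) ∧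
      ρ (ha.T (cs.simple i)) (single b (1 : Kq))
        = (uu ^ 2 - uu - 1) • single b (1 : Kq) + (uu ^ 2 - uu) • single a (1 : Kq))

/-- `Γ` is a `W`-digraph: the assignment `T_s ↦ τ_s` extends to a
representation of `H` on `M(Γ)`. -/
def IsWDigraph {V : Type*} (cs : CoxeterSystem M W) (ha : HeckeAlgebra cs H)
    (Γ : SLabeledDigraph V B) : Prop :=
  ∃ ρ : H →ₐ[Kq] Module.End Kq (V →₀ Kq), WDigraphRep cs ha Γ ρ

/-!
Fix a vertex `a`. The image of the orbit map `h ↦ ρ h a` is an `H`-submodule of `M(Γ)`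
containing `a`. Along every edge `{a, b}` some `τ_s` sends `a` to `c a + d b` with `d` one of
`1, u + 1, u², u² - u`, all nonzero in `ℚ(u)`; so the image contains `b` as soon as it contains
`a`, and by connectedness it contains every vertex. Thus the orbit map is onto, and
`|V| = dim M(Γ) ≤ dim H = |W|`.
-/

def AlgHom.orbitMap {R A N : Type*} [CommSemiring R] [Semiring A] [Algebra R A]
    [AddCommMonoid N] [Module R N] (ρ : A →ₐ[R] Module.End R N) (x : N) : A →ₗ[R] N :=
  (LinearMap.applyₗ x).comp ρ.toLinearMap

theorem AlgHom.apply_mem_range_orbitMap {R A N : Type*} [CommSemiring R] [Semiring A]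
    [Algebra R A] [AddCommMonoid N] [Module R N] (ρ : A →ₐ[R] Module.End R N) (x : N)
    (a : A) {y : N} (hy : y ∈ LinearMap.range (ρ.orbitMap x)) :
    ρ a y ∈ LinearMap.range (ρ.orbitMap x) := by
  obtain ⟨h, rfl⟩ := hy
  exact ⟨a * h, by simp [AlgHom.orbitMap]⟩

theorem Submodule.mem_of_smul_add_smul_mem {K N : Type*} [Field K] [AddCommGroup N]
    [Module K N] {p : Submodule K N} {x y : N} {c d : K} (hd : d ≠ 0) (hx : x ∈ p)
    (h : c • x + d • y ∈ p) : y ∈ p :=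
  (p.smul_mem_iff hd).mp ((p.add_mem_iff_right (p.smul_mem c hx)).mp h)

theorem uu_ne_zero : uu ≠ 0 := RatFunc.X_ne_zero

theorem uu_sub_algebraMap_ne_zero (c : ℚ) : uu - algebraMap ℚ Kq c ≠ 0 := by
  have : uu - algebraMap ℚ Kq c = algebraMap (Polynomial ℚ) Kq (Polynomial.X - Polynomial.C c) := by
    simp [uu, RatFunc.algebraMap_X]
  rw [this]
  exact RatFunc.algebraMap_ne_zero (Polynomial.X_sub_C_ne_zero c)

theorem uu_add_one_ne_zero : uu + 1 ≠ 0 := by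
  simpa [sub_eq_add_neg] using uu_sub_algebraMap_ne_zero (-1)

theorem uu_sq_sub_uu_ne_zero : uu ^ 2 - uu ≠ 0 := by
  have h := mul_ne_zero uu_ne_zero (uu_sub_algebraMap_ne_zero 1)
  rw [map_one] at h
  convert h using 1
  ring

namespace WDigraphRep

variable {V : Type*} {cs : CoxeterSystem M W} {ha : HeckeAlgebra cs H}
  {Γ : SLabeledDigraph V B} {ρ : H →ₐ[Kq] Module.End Kq (V →₀ Kq)}

theorem exists_apply_eq_smul_add_smul (hρ : WDigraphRep cs ha Γ ρ) {a b : V}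
    (hab : Γ.UAdj a b) : ∃ (s : B) (c d : Kq), d ≠ 0 ∧
      ρ (ha.T (cs.simple s)) (single a 1) = c • single a 1 + d • single b 1 := by
  rcases hab with ⟨s, (_ | _), hedge⟩ | ⟨s, (_ | _), hedge⟩
  · exact ⟨s, 0, 1, one_ne_zero, by simp [((hρ a b s).1 hedge).1]⟩
  · exact ⟨s, uu, uu + 1, uu_add_one_ne_zero, ((hρ a b s).2 hedge).1⟩
  · exact ⟨s, uu ^ 2 - 1, uu ^ 2, pow_ne_zero 2 uu_ne_zero, ((hρ b a s).1 hedge).2⟩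
  · exact ⟨s, uu ^ 2 - uu - 1, uu ^ 2 - uu, uu_sq_sub_uu_ne_zero, ((hρ b a s).2 hedge).2⟩

theorem single_mem_of_uAdj (hρ : WDigraphRep cs ha Γ ρ) {p : Submodule Kq (V →₀ Kq)}
    (hp : ∀ (s : B), ∀ x ∈ p, ρ (ha.T (cs.simple s)) x ∈ p) {a b : V} (hab : Γ.UAdj a b)
    (hmem : single a 1 ∈ p) : single b 1 ∈ p := by
  obtain ⟨s, c, d, hd, hτ⟩ := exists_apply_eq_smul_add_smul hρ hab
  exact p.mem_of_smul_add_smul_mem hd hmem (hτ ▸ hp s _ hmem)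

theorem orbitMap_surjective (hρ : WDigraphRep cs ha Γ ρ) (hconn : Γ.Connected) (a : V) :
    Function.Surjective (ρ.orbitMap (single a 1)) := by
  set p := LinearMap.range (ρ.orbitMap (single a 1))
  have hsingle : ∀ v, single v 1 ∈ p := fun v => by
    induction hconn a v with
    | refl => exact ⟨1, by simp [AlgHom.orbitMap]⟩
    | tail _ hbc ih =>
      exact single_mem_of_uAdj hρ (fun s _ => ρ.apply_mem_range_orbitMap _ _) hbc ih
  rw [← LinearMap.range_eq_top, eq_top_iff, ← Finsupp.basisSingleOne.span_eq,
    Submodule.span_le]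
  rintro _ ⟨v, rfl⟩
  exact hsingle v

end WDigraphRep

theorem wdigraph_card_vertices_le_card_group_general {V : Type uV}
    (cs : CoxeterSystem M W) (ha : HeckeAlgebra cs H)
    (Γ : SLabeledDigraph V B) (hconn : Γ.Connected) (hwd : IsWDigraph cs ha Γ) :
    Cardinal.lift.{uW} (Cardinal.mk V) ≤ Cardinal.lift.{uV} (Cardinal.mk W) := by
  obtain ⟨ρ, hρ⟩ := hwd
  rcases isEmpty_or_nonempty V with _ | ⟨⟨a⟩⟩
  · simp
  have hsurj : Function.Surjective
      (ρ.orbitMap (single a 1) ∘ₗ ha.basis.repr.symm.toLinearMap) :=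
    (WDigraphRep.orbitMap_surjective hρ hconn a).comp ha.basis.repr.symm.surjective
  simpa using LinearMap.lift_rank_le_of_surjective _ hsurj

/-- If `(W,S)` is finite and `Γ` is a connected `W`-digraph,
then the number of vertices of `Γ` is at most `|W|`. -/
theorem wdigraph_card_vertices_le_card_group {V : Type uV} [Finite W]
    (cs : CoxeterSystem M W) (ha : HeckeAlgebra cs H)
    (Γ : SLabeledDigraph V B) (hconn : Γ.Connected) (hwd : IsWDigraph cs ha Γ) :
    Cardinal.lift.{uW} (Cardinal.mk V) ≤ Cardinal.lift.{uV} (Cardinal.mk W) :=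
  wdigraph_card_vertices_le_card_group_general cs ha Γ hconn hwd
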